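/- In any controlled hidden Markov model with output-feedback policy over horizon T ≥ 1, the smoother entropy satisfies the one-step recursion H(X^T | Y^T, U^{T-1}) = H(X^{T-1} | Y^{T-1}, U^{T-2}) + H(X_T | Y^T, U^{T-1}) − H(X_T | Y^{T-1}, U^{T-1}) + H(X_T | X_{T-1}, U_{T-1}), where for T = 1 the term H(X^{0} | Y^{0}, U^{-1}) is interpreted as H(X_0 | Y_0). -/

import Mathlib

open Finset

/-- Trajectory space of a controlled HMM over horizon `T`:
states `x_0,…,x_T`, measurements `y_0,…,y_T`, controls `u_0,…,u_{T-1}`. -/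
abbrev Traj (T : ℕ) (X Y U : Type*) : Type _ :=
  (Fin (T + 1) → X) × (Fin (T + 1) → Y) × (Fin T → U)

/-- A controlled hidden Markov model with output-feedback policy over horizon `T`,
with finite state space `X`, measurement space `Y` and control space `U`.
`f t x' x u = f_t(x' | x, u)`, `g0 y x = g₀(y | x)`, `g t y x u = g_{t+1}(y | x, u_t)`,
and `pol t a ys us = μ_t(a | y^t, u^{t-1})` (causality is imposed by `pol_causal`). -/
structure CHMM (T : ℕ) (X Y U : Type*) [Fintype X] [Fintype Y] [Fintype U] where
  p0 : X → ℝ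
  f : Fin T → X → X → U → ℝ
  g0 : Y → X → ℝ
  g : Fin T → Y → X → U → ℝ
  pol : Fin T → U → (Fin (T + 1) → Y) → (Fin T → U) → ℝ
  p0_nonneg : ∀ x, 0 ≤ p0 x
  p0_sum : ∑ x, p0 x = 1
  f_nonneg : ∀ t x' x u, 0 ≤ f t x' x u
  f_sum : ∀ t x u, ∑ x', f t x' x u = 1
  g0_nonneg : ∀ y x, 0 ≤ g0 y x
  g0_sum : ∀ x, ∑ y, g0 y x = 1
  g_nonneg : ∀ t y x u, 0 ≤ g t y x u
  g_sum : ∀ t x u, ∑ y, g t y x u = 1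
  pol_nonneg : ∀ t a ys us, 0 ≤ pol t a ys us
  pol_sum : ∀ t ys us, ∑ a, pol t a ys us = 1
  pol_causal : ∀ (t : Fin T) (a : U) (ys ys' : Fin (T + 1) → Y) (us us' : Fin T → U),
    (∀ i : Fin (T + 1), (i : ℕ) ≤ (t : ℕ) → ys i = ys' i) →
    (∀ i : Fin T, (i : ℕ) < (t : ℕ) → us i = us' i) →
    pol t a ys us = pol t a ys' us'

variable {T : ℕ} {X Y U : Type*} [Fintype X] [Fintype Y] [Fintype U]
  [DecidableEq X] [DecidableEq Y] [DecidableEq U]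

/-- The joint probability mass function on trajectories induced by a controlled HMM. -/
noncomputable def CHMM.p (M : CHMM T X Y U) (ω : Traj T X Y U) : ℝ :=
  M.p0 (ω.1 0) * M.g0 (ω.2.1 0) (ω.1 0) *
    ∏ t : Fin T,
      (M.pol t (ω.2.2 t) ω.2.1 ω.2.2 *
        M.f t (ω.1 t.succ) (ω.1 t.castSucc) (ω.2.2 t) *
        M.g t (ω.2.1 t.succ) (ω.1 t.succ) (ω.2.2 t))

/-- `M.prob A a = P(A = a)` for a random variable `A` on trajectory space. -/
noncomputable def CHMM.prob (M : CHMM T X Y U) {α : Type*} [DecidableEq α]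
    (A : Traj T X Y U → α) (a : α) : ℝ :=
  ∑ ω : Traj T X Y U, if A ω = a then M.p ω else 0

/-- `M.cprob A a B b = P(A = a | B = b) = P(A = a, B = b) / P(B = b)`. -/
noncomputable def CHMM.cprob (M : CHMM T X Y U) {α β : Type*} [DecidableEq α] [DecidableEq β]
    (A : Traj T X Y U → α) (a : α) (B : Traj T X Y U → β) (b : β) : ℝ :=
  M.prob (fun ω => (A ω, B ω)) (a, b) / M.prob B b

/-- Shannon entropy `H(A)` of a random variable `A` (with `0 log 0 = 0`, as `Real.log 0 = 0`). -/
noncomputable def CHMM.entropy (M : CHMM T X Y U) {α : Type*} [Fintype α] [DecidableEq α]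
    (A : Traj T X Y U → α) : ℝ :=
  -∑ a : α, M.prob A a * Real.log (M.prob A a)

/-- Conditional entropy `H(A | B) = -∑_{a,b} P(A=a,B=b) log P(A=a|B=b)`
(terms with `P(A=a,B=b) = 0`, in particular those with `P(B=b) = 0`, vanish). -/
noncomputable def CHMM.condEnt (M : CHMM T X Y U) {α β : Type*}
    [Fintype α] [DecidableEq α] [Fintype β] [DecidableEq β]
    (A : Traj T X Y U → α) (B : Traj T X Y U → β) : ℝ :=
  -∑ a : α, ∑ b : β,
      M.prob (fun ω => (A ω, B ω)) (a, b) *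
        Real.log (M.prob (fun ω => (A ω, B ω)) (a, b) / M.prob B b)

/-- Conditional mutual information `I(A ; B | C) = H(A | C) - H(A | B, C)`. -/
noncomputable def CHMM.condMI (M : CHMM T X Y U) {α β γ : Type*}
    [Fintype α] [DecidableEq α] [Fintype β] [DecidableEq β] [Fintype γ] [DecidableEq γ]
    (A : Traj T X Y U → α) (B : Traj T X Y U → β) (C : Traj T X Y U → γ) : ℝ :=
  M.condEnt A C - M.condEnt A (fun ω => (B ω, C ω))

/-- Point-wise conditional entropy `h(A | b) = -∑_a P(A=a|B=b) log P(A=a|B=b)`. -/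
noncomputable def CHMM.pcondEnt (M : CHMM T X Y U) {α β : Type*}
    [Fintype α] [DecidableEq α] [DecidableEq β]
    (A : Traj T X Y U → α) (B : Traj T X Y U → β) (b : β) : ℝ :=
  -∑ a : α, M.cprob A a B b * Real.log (M.cprob A a B b)

/-- Point-wise conditional entropy of `A` given the random variable `A'` and the
realization `B = b`:  `h(A | A', b) = -∑_{a,a'} P(A=a,A'=a'|B=b) log P(A=a|A'=a',B=b)`. -/
noncomputable def CHMM.pcondEnt2 (M : CHMM T X Y U) {α α' β : Type*}
    [Fintype α] [DecidableEq α] [Fintype α'] [DecidableEq α'] [DecidableEq β]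
    (A : Traj T X Y U → α) (A' : Traj T X Y U → α') (B : Traj T X Y U → β) (b : β) : ℝ :=
  -∑ a : α, ∑ a' : α',
      M.cprob (fun ω => (A ω, A' ω)) (a, a') B b *
        Real.log (M.prob (fun ω => (A ω, (A' ω, B ω))) (a, (a', b)) /
          M.prob (fun ω => (A' ω, B ω)) (a', b))

/-- The state history `X^{n-1} = (X_0, …, X_{n-1})` as a random variable. -/
def Xpref (T : ℕ) {X Y U : Type*} (n : ℕ) (h : n ≤ T + 1) :
    Traj T X Y U → (Fin n → X) :=
  fun ω i => ω.1 (Fin.castLE h i)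

/-- The measurement history `Y^{n-1} = (Y_0, …, Y_{n-1})` as a random variable. -/
def Ypref (T : ℕ) {X Y U : Type*} (n : ℕ) (h : n ≤ T + 1) :
    Traj T X Y U → (Fin n → Y) :=
  fun ω i => ω.2.1 (Fin.castLE h i)

/-- The control history `U^{n-1} = (U_0, …, U_{n-1})` as a random variable. -/
def Upref (T : ℕ) {X Y U : Type*} (n : ℕ) (h : n ≤ T) :
    Traj T X Y U → (Fin n → U) :=
  fun ω i => ω.2.2 (Fin.castLE h i)

/-- The state `X_t` as a random variable. -/
def Xat (T : ℕ) {X Y U : Type*} (t : ℕ) (h : t < T + 1) : Traj T X Y U → X :=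
  fun ω => ω.1 ⟨t, h⟩

/-- The measurement `Y_t` as a random variable. -/
def Yat (T : ℕ) {X Y U : Type*} (t : ℕ) (h : t < T + 1) : Traj T X Y U → Y :=
  fun ω => ω.2.1 ⟨t, h⟩

/-- The control `U_t` as a random variable. -/
def Uat (T : ℕ) {X Y U : Type*} (t : ℕ) (h : t < T) : Traj T X Y U → U :=
  fun ω => ω.2.2 ⟨t, h⟩

/-! Split `X^T = (X^{T-1}, X_T)` and apply the chain rule; what remains are three conditional
independences of the model: `Y_T ⊥ X^{T-1}` given `(X_T, Y^{T-1}, U^{T-1})`, since `g` reads only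
`x_T` and `u_{T-1}`; `U_{T-1} ⊥ X^{T-1}` given `(Y^{T-1}, U^{T-2})`, since the policy is output
feedback; and `X_T ⊥ (X^{T-1}, Y^{T-1}, U^{T-2})` given `(X_{T-1}, U_{T-1})`, the Markov property.
Each is read off the factorisation of `p` once the last step `(u_{T-1}, x_T, y_T)` is split off.
Conditional entropies are handled as expectations `-E[log P(A | B)]` over trajectories, so that
the chain rule and the dropping of a conditionally independent variable become pointwise
identities on the support of `p`. -/

namespace CHMM

section General

omit [DecidableEq X] [DecidableEq Y] [DecidableEq U]

variable (M : CHMM T X Y U) {α β γ δ : Type*} [DecidableEq α] [DecidableEq β] [DecidableEq γ]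
  [DecidableEq δ]

lemma p_nonneg (ω : Traj T X Y U) : 0 ≤ M.p ω :=
  mul_nonneg (mul_nonneg (M.p0_nonneg _) (M.g0_nonneg _ _)) <| prod_nonneg fun _ _ =>
    mul_nonneg (mul_nonneg (M.pol_nonneg _ _ _ _) (M.f_nonneg _ _ _ _)) (M.g_nonneg _ _ _ _)

lemma sum_prob_mul [Fintype α] (A : Traj T X Y U → α) (G : α → ℝ) :
    ∑ a, M.prob A a * G a = ∑ ω, M.p ω * G (A ω) := by
  simp only [prob, sum_mul, ite_mul, zero_mul]
  rw [sum_comm]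
  simp

noncomputable def atomProb (F : Traj T X Y U → α) (ω : Traj T X Y U) : ℝ := M.prob F (F ω)

lemma p_le_atomProb (F : Traj T X Y U → α) (ω : Traj T X Y U) : M.p ω ≤ M.atomProb F ω := by
  have := single_le_sum (f := fun ω' => if F ω' = F ω then M.p ω' else 0)
    (fun ω' _ => by split_ifs <;> simp [M.p_nonneg ω']) (mem_univ ω)
  simpa [atomProb, prob] using this

lemma atomProb_congr {F : Traj T X Y U → α} {G : Traj T X Y U → β}
    (h : ∀ ω₁ ω₂, F ω₁ = F ω₂ ↔ G ω₁ = G ω₂) : M.atomProb F = M.atomProb G :=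
  funext fun ω => sum_congr rfl fun ω' _ => if_congr (h ω' ω) rfl rfl

lemma condEnt_eq_neg_sum_mul_log [Fintype α] [Fintype β] (A : Traj T X Y U → α)
    (B : Traj T X Y U → β) :
    M.condEnt A B = -∑ ω, M.p ω *
      Real.log (M.atomProb (fun ω => (A ω, B ω)) ω / M.atomProb B ω) := by
  rw [condEnt, ← Fintype.sum_prod_type']
  exact congrArg _ (M.sum_prob_mul (fun ω => (A ω, B ω))
    fun ab => Real.log (M.prob (fun ω => (A ω, B ω)) ab / M.prob B ab.2))

lemma sum_p_mul_congr {G H : Traj T X Y U → ℝ} (h : ∀ ω, 0 < M.p ω → G ω = H ω) :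
    ∑ ω, M.p ω * G ω = ∑ ω, M.p ω * H ω :=
  sum_congr rfl fun ω _ => (M.p_nonneg ω).eq_or_lt.elim (fun h0 => by simp [← h0])
    fun hpos => by rw [h ω hpos]

lemma condEnt_pair_eq_add [Fintype α] [Fintype β] [Fintype γ] (A : Traj T X Y U → α)
    (B : Traj T X Y U → β) (C : Traj T X Y U → γ) :
    M.condEnt (fun ω => (A ω, B ω)) C = M.condEnt B C + M.condEnt A (fun ω => (B ω, C ω)) := by
  simp only [condEnt_eq_neg_sum_mul_log, ← neg_add, ← sum_add_distrib, ← mul_add]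
  refine congrArg _ (M.sum_p_mul_congr fun ω hω => ?_)
  have hassoc : M.atomProb (fun ω => ((A ω, B ω), C ω)) =
      M.atomProb (fun ω => (A ω, B ω, C ω)) :=
    M.atomProb_congr fun _ _ => by simp only [Prod.ext_iff, and_assoc]
  have h3 := hω.trans_le (M.p_le_atomProb (fun ω => (A ω, B ω, C ω)) ω)
  have h2 := hω.trans_le (M.p_le_atomProb (fun ω => (B ω, C ω)) ω)
  have h1 := hω.trans_le (M.p_le_atomProb C ω)
  rw [hassoc, ← Real.log_mul (by positivity) (by positivity)]
  congr 1
  field_simp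

lemma condEnt_congr [Fintype α] [Fintype β] [Fintype γ] [Fintype δ] {A : Traj T X Y U → α}
    {B : Traj T X Y U → β} {A' : Traj T X Y U → γ} {B' : Traj T X Y U → δ}
    (hAB : ∀ ω₁ ω₂, (A ω₁, B ω₁) = (A ω₂, B ω₂) ↔ (A' ω₁, B' ω₁) = (A' ω₂, B' ω₂))
    (hB : ∀ ω₁ ω₂, B ω₁ = B ω₂ ↔ B' ω₁ = B' ω₂) : M.condEnt A B = M.condEnt A' B' := by
  rw [condEnt_eq_neg_sum_mul_log, condEnt_eq_neg_sum_mul_log, M.atomProb_congr hAB,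
    M.atomProb_congr hB]

lemma condEnt_pair_comm [Fintype α] [Fintype β] [Fintype γ] (A : Traj T X Y U → α)
    (B : Traj T X Y U → β) (C : Traj T X Y U → γ) :
    M.condEnt (fun ω => (A ω, B ω)) C = M.condEnt (fun ω => (B ω, A ω)) C :=
  M.condEnt_congr (fun _ _ => by simp only [Prod.ext_iff]; tauto) fun _ _ => Iff.rfl

lemma sum_prob_fst [Fintype α] (A : Traj T X Y U → α) (B : Traj T X Y U → β) (b : β) :
    ∑ a, M.prob (fun ω => (A ω, B ω)) (a, b) = M.prob B b := by
  simp only [prob]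
  rw [sum_comm]
  refine sum_congr rfl fun ω _ => ?_
  simp [Prod.ext_iff, ite_and]

lemma sum_prob_snd [Fintype β] (A : Traj T X Y U → α) (B : Traj T X Y U → β)
    (C : Traj T X Y U → γ) (a : α) (c : γ) :
    ∑ b, M.prob (fun ω => (A ω, B ω, C ω)) (a, b, c) = M.prob (fun ω => (A ω, C ω)) (a, c) := by
  simp only [prob]
  rw [sum_comm]
  refine sum_congr rfl fun ω _ => ?_
  by_cases hA : A ω = a <;> simp [Prod.ext_iff, ite_and, hA]

/-- Stated multiplicatively, so that atoms with `P(C = c) = 0` need no separate care. -/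
def CondIndep (A : Traj T X Y U → α) (B : Traj T X Y U → β) (C : Traj T X Y U → γ) : Prop :=
  ∀ a b c, M.prob (fun ω => (A ω, B ω, C ω)) (a, b, c) * M.prob C c =
    M.prob (fun ω => (A ω, C ω)) (a, c) * M.prob (fun ω => (B ω, C ω)) (b, c)

lemma condIndep_of_prob_eq_mul [Fintype α] [Fintype β] {A : Traj T X Y U → α}
    {B : Traj T X Y U → β} {C : Traj T X Y U → γ} (q : α → γ → ℝ) (r : β → γ → ℝ)
    (h : ∀ a b c, M.prob (fun ω => (A ω, B ω, C ω)) (a, b, c) = q a c * r b c) :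
    M.CondIndep A B C := by
  intro a b c
  have hBC : ∀ b, M.prob (fun ω => (B ω, C ω)) (b, c) = (∑ a, q a c) * r b c := fun b => by
    rw [← M.sum_prob_fst A, sum_mul]
    simp only [h]
  have hAC : M.prob (fun ω => (A ω, C ω)) (a, c) = q a c * ∑ b, r b c := by
    rw [← M.sum_prob_snd A B C, mul_sum]
    simp only [h]
  have hC : M.prob C c = (∑ a, q a c) * ∑ b, r b c := by
    rw [← M.sum_prob_fst B C, mul_sum]
    simp only [hBC]
  rw [h, hBC, hAC, hC]
  ring

lemma condEnt_eq_of_condIndep [Fintype α] [Fintype β] [Fintype γ] [Fintype δ]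
    {A : Traj T X Y U → α} {B : Traj T X Y U → β} {C : Traj T X Y U → γ}
    {D : Traj T X Y U → δ} (hD : ∀ ω₁ ω₂, D ω₁ = D ω₂ ↔ B ω₁ = B ω₂ ∧ C ω₁ = C ω₂)
    (h : M.CondIndep A B C) : M.condEnt A D = M.condEnt A C := by
  simp only [condEnt_eq_neg_sum_mul_log]
  refine congrArg _ (M.sum_p_mul_congr fun ω hω => ?_)
  have hABC : M.atomProb (fun ω => (A ω, D ω)) = M.atomProb (fun ω => (A ω, B ω, C ω)) :=
    M.atomProb_congr fun ω₁ ω₂ => by simp only [Prod.ext_iff, hD]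
  have hBC : M.atomProb D = M.atomProb (fun ω => (B ω, C ω)) :=
    M.atomProb_congr fun ω₁ ω₂ => by simp only [Prod.ext_iff, hD]
  have h2 := hω.trans_le (M.p_le_atomProb (fun ω => (B ω, C ω)) ω)
  have h1 := hω.trans_le (M.p_le_atomProb C ω)
  rw [hABC, hBC]
  congr 1
  rw [div_eq_div_iff h2.ne' h1.ne']
  exact h (A ω) (B ω) (C ω)

variable {α₁ α₂ α₃ α₄ β₁ β₂ β₃ β₄ β₅ : Type*} [Fintype α₁] [DecidableEq α₁] [Fintype α₂]
  [DecidableEq α₂] [Fintype α₃] [DecidableEq α₃] [Fintype α₄] [DecidableEq α₄] [Fintype β₁]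
  [DecidableEq β₁] [Fintype β₂] [DecidableEq β₂] [Fintype β₃] [DecidableEq β₃] [Fintype β₄]
  [DecidableEq β₄] [Fintype β₅] [DecidableEq β₅]

/-- Read `Xall, Xpast, Xnow, Xprev` as `X^T, X^{T-1}, X_T, X_{T-1}`, `Zpast, Unow, Ynow` as
`(Y^{T-1}, U^{T-2}), U_{T-1}, Y_T`, and `V, W` as `(Y^{T-1}, U^{T-1}), (Y^T, U^{T-1})`. -/
theorem condEnt_recursion_of_condIndep {Xall : Traj T X Y U → α₁} {Xpast : Traj T X Y U → α₂}
    {Xnow : Traj T X Y U → α₃} {Xprev : Traj T X Y U → α₄} {Zpast : Traj T X Y U → β₁}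
    {Unow : Traj T X Y U → β₂} {Ynow : Traj T X Y U → β₃} {V : Traj T X Y U → β₄}
    {W : Traj T X Y U → β₅}
    (hXall : ∀ ω₁ ω₂, Xall ω₁ = Xall ω₂ ↔ Xpast ω₁ = Xpast ω₂ ∧ Xnow ω₁ = Xnow ω₂)
    (hV : ∀ ω₁ ω₂, V ω₁ = V ω₂ ↔ Zpast ω₁ = Zpast ω₂ ∧ Unow ω₁ = Unow ω₂)
    (hW : ∀ ω₁ ω₂, W ω₁ = W ω₂ ↔ V ω₁ = V ω₂ ∧ Ynow ω₁ = Ynow ω₂)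
    (hprev : ∀ ω₁ ω₂, Xpast ω₁ = Xpast ω₂ → Xprev ω₁ = Xprev ω₂)
    (hYnow : M.CondIndep Xpast Ynow fun ω => (Xnow ω, Zpast ω, Unow ω))
    (hUnow : M.CondIndep Xpast Unow Zpast)
    (hXnow : M.CondIndep Xnow (fun ω => (Xpast ω, Zpast ω)) fun ω => (Xprev ω, Unow ω)) :
    M.condEnt Xall W = M.condEnt Xpast Zpast + M.condEnt Xnow W - M.condEnt Xnow V +
      M.condEnt Xnow fun ω => (Xprev ω, Unow ω) := by
  have hsplit : M.condEnt Xall W = M.condEnt (fun ω => (Xpast ω, Xnow ω)) W :=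
    M.condEnt_congr (fun ω₁ ω₂ => by simp only [Prod.ext_iff, hXall]) fun _ _ => Iff.rfl
  have hYdrop : M.condEnt Xpast (fun ω => (Xnow ω, W ω)) =
      M.condEnt Xpast (fun ω => (Xnow ω, Zpast ω, Unow ω)) :=
    M.condEnt_eq_of_condIndep (fun ω₁ ω₂ => by simp only [Prod.ext_iff, hW, hV]; tauto) hYnow
  have hV' : M.condEnt Xpast (fun ω => (Xnow ω, V ω)) =
      M.condEnt Xpast (fun ω => (Xnow ω, Zpast ω, Unow ω)) :=
    M.condEnt_congr (fun ω₁ ω₂ => by simp only [Prod.ext_iff, hV])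
      fun ω₁ ω₂ => by simp only [Prod.ext_iff, hV]
  have hUdrop : M.condEnt Xpast V = M.condEnt Xpast Zpast :=
    M.condEnt_eq_of_condIndep (fun ω₁ ω₂ => (hV ω₁ ω₂).trans and_comm) hUnow
  have hMarkov : M.condEnt Xnow (fun ω => (Xpast ω, V ω)) =
      M.condEnt Xnow (fun ω => (Xprev ω, Unow ω)) :=
    M.condEnt_eq_of_condIndep (fun ω₁ ω₂ => by
      have := hprev ω₁ ω₂
      simp only [Prod.ext_iff, hV]
      tauto) hXnow
  linarith [M.condEnt_pair_eq_add Xpast Xnow W, M.condEnt_pair_eq_add Xpast Xnow V,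
    M.condEnt_pair_eq_add Xnow Xpast V, M.condEnt_pair_comm Xpast Xnow V]

end General

section Prefix

omit [Fintype X] [Fintype Y] [Fintype U] [DecidableEq X] [DecidableEq Y] [DecidableEq U]

theorem _root_.Fin.eq_iff_init_eq_and_last_eq {n : ℕ} {α : Type*} {v w : Fin (n + 1) → α} :
    v = w ↔ Fin.init v = Fin.init w ∧ v (Fin.last n) = w (Fin.last n) :=
  ⟨fun h => h ▸ ⟨rfl, rfl⟩, fun ⟨h₁, h₂⟩ => by
    rw [← Fin.snoc_init_self v, ← Fin.snoc_init_self w, h₁, h₂]⟩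

lemma Xpref_succ_eq_iff {n : ℕ} (h : n + 1 ≤ T + 1) (ω₁ ω₂ : Traj T X Y U) :
    Xpref T (n + 1) h ω₁ = Xpref T (n + 1) h ω₂ ↔
      Xpref T n (Nat.le_of_succ_le h) ω₁ = Xpref T n (Nat.le_of_succ_le h) ω₂ ∧
        Xat T n h ω₁ = Xat T n h ω₂ :=
  Fin.eq_iff_init_eq_and_last_eq

lemma Ypref_succ_eq_iff {n : ℕ} (h : n + 1 ≤ T + 1) (ω₁ ω₂ : Traj T X Y U) :
    Ypref T (n + 1) h ω₁ = Ypref T (n + 1) h ω₂ ↔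
      Ypref T n (Nat.le_of_succ_le h) ω₁ = Ypref T n (Nat.le_of_succ_le h) ω₂ ∧
        Yat T n h ω₁ = Yat T n h ω₂ :=
  Fin.eq_iff_init_eq_and_last_eq

lemma Upref_succ_eq_iff {n : ℕ} (h : n + 1 ≤ T) (ω₁ ω₂ : Traj T X Y U) :
    Upref T (n + 1) h ω₁ = Upref T (n + 1) h ω₂ ↔
      Upref T n (Nat.le_of_succ_le h) ω₁ = Upref T n (Nat.le_of_succ_le h) ω₂ ∧
        Uat T n h ω₁ = Uat T n h ω₂ :=
  Fin.eq_iff_init_eq_and_last_eq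

end Prefix

variable {S : ℕ}

section Coordinates

omit [Fintype X] [Fintype Y] [Fintype U] [DecidableEq X] [DecidableEq Y] [DecidableEq U]

/-- With `T = S + 1`, a trajectory is sent to
`((((x^{T-1}, y^{T-1}, u^{T-2}), u_{T-1}), x_T), y_T)`. -/
def lastStep : Traj (S + 1) X Y U ≃ ((Traj S X Y U × U) × X) × Y where
  toFun ω := ((((Fin.init ω.1, Fin.init ω.2.1, Fin.init ω.2.2), ω.2.2 (Fin.last S)),
    ω.1 (Fin.last (S + 1))), ω.2.1 (Fin.last (S + 1)))
  invFun z := (Fin.snoc z.1.1.1.1 z.1.2, Fin.snoc z.1.1.1.2.1 z.2, Fin.snoc z.1.1.1.2.2 z.1.1.2)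
  left_inv ω := by simp
  right_inv z := by simp

variable (z : ((Traj S X Y U × U) × X) × Y)

@[simp] lemma Xpref_lastStep_symm :
    Xpref (S + 1) (S + 1) (Nat.le_succ _) (lastStep.symm z) = z.1.1.1.1 :=
  congrArg (·.1.1.1.1) (lastStep.apply_symm_apply z)

@[simp] lemma Ypref_lastStep_symm :
    Ypref (S + 1) (S + 1) (Nat.le_succ _) (lastStep.symm z) = z.1.1.1.2.1 :=
  congrArg (·.1.1.1.2.1) (lastStep.apply_symm_apply z)

@[simp] lemma Upref_lastStep_symm :
    Upref (S + 1) S S.le_succ (lastStep.symm z) = z.1.1.1.2.2 :=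
  congrArg (·.1.1.1.2.2) (lastStep.apply_symm_apply z)

@[simp] lemma Uat_lastStep_symm :
    Uat (S + 1) S S.lt_succ_self (lastStep.symm z) = z.1.1.2 :=
  congrArg (·.1.1.2) (lastStep.apply_symm_apply z)

@[simp] lemma Xat_lastStep_symm :
    Xat (S + 1) (S + 1) (Nat.lt_succ_self _) (lastStep.symm z) = z.1.2 :=
  congrArg (·.1.2) (lastStep.apply_symm_apply z)

@[simp] lemma Yat_lastStep_symm :
    Yat (S + 1) (S + 1) (Nat.lt_succ_self _) (lastStep.symm z) = z.2 :=
  congrArg (·.2) (lastStep.apply_symm_apply z)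

end Coordinates

section Weights

omit [DecidableEq X] [DecidableEq Y] [DecidableEq U]

variable (M : CHMM (S + 1) X Y U)

noncomputable def histDyn (h : Traj S X Y U) : ℝ :=
  M.p0 (h.1 0) * M.g0 (h.2.1 0) (h.1 0) *
    ∏ t : Fin S, (M.f t.castSucc (h.1 t.succ) (h.1 t.castSucc) (h.2.2 t) *
      M.g t.castSucc (h.2.1 t.succ) (h.1 t.succ) (h.2.2 t))

/-- The policy never reads `y_{S+1}`, so the measurement history is padded arbitrarily
(by repeating `y_S`). -/
noncomputable def histPol (yu : (Fin (S + 1) → Y) × (Fin S → U)) (u : U) : ℝ :=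
  ∏ t : Fin (S + 1), M.pol t ((Fin.snoc yu.2 u : Fin (S + 1) → U) t)
    (Fin.snoc yu.1 (yu.1 (Fin.last S))) (Fin.snoc yu.2 u)

lemma p_lastStep_symm (h : Traj S X Y U) (u : U) (x : X) (y : Y) :
    M.p (lastStep.symm (((h, u), x), y)) = M.histDyn h * M.histPol h.2 u *
      M.f (Fin.last S) x (h.1 (Fin.last S)) u * M.g (Fin.last S) y x u := by
  have hpol : ∀ (t : Fin (S + 1)) (v : U), M.pol t v (Fin.snoc h.2.1 y) (Fin.snoc h.2.2 u)
      = M.pol t v (Fin.snoc h.2.1 (h.2.1 (Fin.last S))) (Fin.snoc h.2.2 u) :=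
    fun t v => M.pol_causal t v _ _ _ _ (fun i hi => by
      simp [Fin.snoc, lt_of_le_of_lt hi t.isLt]) fun _ _ => rfl
  have h0 : (0 : Fin (S + 2)) = Fin.castSucc 0 := rfl
  simp only [p, lastStep, Equiv.coe_fn_symm_mk, histDyn, histPol, prod_mul_distrib,
    Fin.prod_univ_castSucc (n := S), hpol]
  simp only [h0, Fin.succ_castSucc, Fin.succ_last, Fin.snoc_castSucc, Fin.snoc_last]
  ring

lemma sum_p_lastStep_symm (h : Traj S X Y U) (u : U) (x : X) :
    ∑ y, M.p (lastStep.symm (((h, u), x), y)) =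
      M.histDyn h * M.histPol h.2 u * M.f (Fin.last S) x (h.1 (Fin.last S)) u := by
  simp only [p_lastStep_symm, ← mul_sum, M.g_sum, mul_one]

lemma sum_sum_p_lastStep_symm (h : Traj S X Y U) (u : U) :
    ∑ x, ∑ y, M.p (lastStep.symm (((h, u), x), y)) = M.histDyn h * M.histPol h.2 u := by
  simp only [sum_p_lastStep_symm, ← mul_sum, M.f_sum, mul_one]

end Weights

variable (M : CHMM (S + 1) X Y U)

lemma condIndep_statePrefix_lastMeas :
    M.CondIndep (Xpref (S + 1) (S + 1) (Nat.le_succ _))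
      (Yat (S + 1) (S + 1) (Nat.lt_succ_self _))
      (fun ω => (Xat (S + 1) (S + 1) (Nat.lt_succ_self _) ω,
        (Ypref (S + 1) (S + 1) (Nat.le_succ _) ω, Upref (S + 1) S S.le_succ ω),
        Uat (S + 1) S S.lt_succ_self ω)) := by
  refine M.condIndep_of_prob_eq_mul
    (fun xs c => M.histDyn (xs, c.2.1) * M.histPol c.2.1 c.2.2 *
      M.f (Fin.last S) c.1 (xs (Fin.last S)) c.2.2)
    (fun y c => M.g (Fin.last S) y c.1 c.2.2) fun xs y ⟨x, yu, u⟩ => ?_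
  rw [prob, ← Equiv.sum_comp lastStep.symm,
    Fintype.sum_eq_single ((((xs, yu), u), x), y) fun z hz => if_neg fun h => hz ?_]
  · simp [p_lastStep_symm]
  simp only [Xpref_lastStep_symm, Ypref_lastStep_symm, Upref_lastStep_symm, Uat_lastStep_symm,
    Xat_lastStep_symm, Yat_lastStep_symm, Prod.ext_iff] at h ⊢
  tauto

lemma condIndep_statePrefix_lastCtrl :
    M.CondIndep (Xpref (S + 1) (S + 1) (Nat.le_succ _)) (Uat (S + 1) S S.lt_succ_self)
      (fun ω => (Ypref (S + 1) (S + 1) (Nat.le_succ _) ω, Upref (S + 1) S S.le_succ ω)) := by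
  refine M.condIndep_of_prob_eq_mul (fun xs yu => M.histDyn (xs, yu)) (fun u yu => M.histPol yu u)
    fun xs u yu => ?_
  rw [prob, ← Equiv.sum_comp lastStep.symm, Fintype.sum_prod_type, Fintype.sum_prod_type]
  simp only [Xpref_lastStep_symm, Ypref_lastStep_symm, Upref_lastStep_symm, Uat_lastStep_symm,
    sum_ite_irrel, sum_const_zero, sum_sum_p_lastStep_symm]
  rw [Fintype.sum_eq_single ((xs, yu), u) fun hu hne => if_neg fun h => hne ?_]
  · simp
  simp only [Prod.ext_iff] at h ⊢
  tauto

lemma condIndep_lastState_history :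
    M.CondIndep (Xat (S + 1) (S + 1) (Nat.lt_succ_self _))
      (fun ω => (Xpref (S + 1) (S + 1) (Nat.le_succ _) ω,
        Ypref (S + 1) (S + 1) (Nat.le_succ _) ω, Upref (S + 1) S S.le_succ ω))
      (fun ω => (Xat (S + 1) S (Nat.lt_succ_of_lt S.lt_succ_self) ω,
        Uat (S + 1) S S.lt_succ_self ω)) := by
  refine M.condIndep_of_prob_eq_mul (fun x c => M.f (Fin.last S) x c.1 c.2)
    (fun h c => if h.1 (Fin.last S) = c.1 then M.histDyn h * M.histPol h.2 c.2 else 0)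
    fun x h ⟨xl, u⟩ => ?_
  rw [prob, ← Equiv.sum_comp lastStep.symm, Fintype.sum_prod_type]
  have hXat : ∀ z : ((Traj S X Y U × U) × X) × Y,
      Xat (S + 1) S (Nat.lt_succ_of_lt S.lt_succ_self) (lastStep.symm z) =
        z.1.1.1.1 (Fin.last S) :=
    fun z => congrFun (Xpref_lastStep_symm z) (Fin.last S)
  simp only [Xpref_lastStep_symm, Ypref_lastStep_symm, Upref_lastStep_symm, Uat_lastStep_symm,
    Xat_lastStep_symm, hXat, sum_ite_irrel, sum_const_zero, sum_p_lastStep_symm]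
  by_cases hxl : h.1 (Fin.last S) = xl
  · subst hxl
    rw [Fintype.sum_eq_single ((h, u), x) fun hux hne => if_neg fun hc => hne ?_]
    · simp only [if_pos]
      ring
    simp only [Prod.ext_iff] at hc ⊢
    tauto
  · refine (sum_eq_zero fun hux _ => if_neg fun hc => hxl ?_).trans (by simp [hxl])
    simp only [Prod.ext_iff] at hc
    rw [← hc.2.1.1]
    exact hc.2.2.1

end CHMM

/-- One-step recursion for the smoother entropy:
`H(X^T | Y^T, U^{T-1}) = H(X^{T-1} | Y^{T-1}, U^{T-2}) + H(X_T | Y^T, U^{T-1})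
  − H(X_T | Y^{T-1}, U^{T-1}) + H(X_T | X_{T-1}, U_{T-1})`. -/
theorem smoother_entropy_one_step_recursion
    {T : ℕ} {X Y U : Type*} [Fintype X] [Fintype Y] [Fintype U]
    [DecidableEq X] [DecidableEq Y] [DecidableEq U]
    (hT : 1 ≤ T) (M : CHMM T X Y U) :
    M.condEnt (Xpref T (T + 1) le_rfl)
        (fun ω => (Ypref T (T + 1) le_rfl ω, Upref T T le_rfl ω)) =
      M.condEnt (Xpref T T (by omega))
          (fun ω => (Ypref T T (by omega) ω, Upref T (T - 1) (by omega) ω))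
        + M.condEnt (Xat T T (by omega))
          (fun ω => (Ypref T (T + 1) le_rfl ω, Upref T T le_rfl ω))
        - M.condEnt (Xat T T (by omega))
          (fun ω => (Ypref T T (by omega) ω, Upref T T le_rfl ω))
        + M.condEnt (Xat T T (by omega))
          (fun ω => (Xat T (T - 1) (by omega) ω, Uat T (T - 1) (by omega) ω)) := by
  obtain ⟨S, rfl⟩ : ∃ S, T = S + 1 := ⟨T - 1, by omega⟩
  exact M.condEnt_recursion_of_condIndep (CHMM.Xpref_succ_eq_iff _)
    (fun _ _ => by simp only [Prod.ext_iff, CHMM.Upref_succ_eq_iff]; exact and_assoc.symm)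
    (fun _ _ => by simp only [Prod.ext_iff, CHMM.Ypref_succ_eq_iff]; tauto)
    (fun _ _ h => congrFun h (Fin.last S)) M.condIndep_statePrefix_lastMeas
    M.condIndep_statePrefix_lastCtrl M.condIndep_lastState_history
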